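/- Suppose s ≥ 1 and fix k ∈ {1, …, N}. Let V : [0,∞) → ℝ^N be a solution of the volume-scavenging system with V_j(0) ≥ 0 for all 1 ≤ j ≤ N, (1/N) Σ_{j=1}^N V_j(0) = V̄ > 0, and V_k(0) ≤ 1. Then V_k(t) ≤ 1 for all t ≥ 0. -/

import Mathlib

/-- Droplet volume as a function of height: v(h) = h(h²+3)/4. -/
noncomputable def vol (h : ℝ) : ℝ := h * (h ^ 2 + 3) / 4

/-- Droplet pressure as a function of height: p(h) = 4h/(h²+1). -/
noncomputable def pres (h : ℝ) : ℝ := 4 * h / (h ^ 2 + 1)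

/-- Pressure as a function of volume: P(V) = p(h) where v(h) = V
(v is a strictly increasing bijection of ℝ, so its inverse is well defined). -/
noncomputable def Pfun (V : ℝ) : ℝ := pres (Function.invFun vol V)

/-- Δ_s(x) = |x|^s sgn(x). -/
noncomputable def Ds (s x : ℝ) : ℝ := |x| ^ s * Real.sign x

/-!
The pressure `P` attains its maximum `2` at `V = 1` (height `h = 1`), and `2 - P(V) ≤ V - 1`
for `V ≥ 1`. Hence, while `V_k ≥ 1`, every exchange term satisfies
`c_{i,k} Δ_s(P(V_i) - P(V_k)) ≤ c_{i,k} (2 - P(V_k))^s ≤ c_{i,k} 2^(s-1) (V_k - 1)`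
(this is where `s ≥ 1` enters), so `V_k' ≤ K (V_k - 1)`. Such a one-sided linear bound makes
`{V_k ≤ 1}` forward invariant, by comparison with the barriers `1 + δ e^((K+1)(τ-t))`.
-/

open Set

theorem le_of_deriv_right_le_mul_sub {f f' : ℝ → ℝ} {a b c K : ℝ}
    (hf : ContinuousOn f (Icc a b))
    (hf' : ∀ x ∈ Ico a b, HasDerivWithinAt f (f' x) (Ici x) x) (ha : f a ≤ c)
    (bound : ∀ x ∈ Ico a b, c ≤ f x → f' x ≤ K * (f x - c)) :
    ∀ x ∈ Icc a b, f x ≤ c := by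
  intro x hx
  refine le_of_forall_pos_le_add fun δ hδ => ?_
  let B : ℝ → ℝ := fun y => c + δ * Real.exp ((K + 1) * (y - x))
  have hB : ∀ y, HasDerivAt B (δ * (Real.exp ((K + 1) * (y - x)) * ((K + 1) * 1))) y :=
    fun y => ((((hasDerivAt_id y).sub_const x).const_mul (K + 1)).exp.const_mul δ).const_add c
  have hBa : f a ≤ B a := by
    have : 0 < δ * Real.exp ((K + 1) * (a - x)) := by positivity
    simp only [B]
    linarith
  have hfB : ∀ y ∈ Ico a b, f y = B y →
      f' y < δ * (Real.exp ((K + 1) * (y - x)) * ((K + 1) * 1)) := by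
    intro y hy hfy
    have hgap : 0 < δ * Real.exp ((K + 1) * (y - x)) := by positivity
    have hfc : f y - c = δ * Real.exp ((K + 1) * (y - x)) := by simp only [hfy, B]; ring
    calc f' y ≤ K * (f y - c) := bound y hy (by linarith)
      _ < (K + 1) * (f y - c) := by linarith
      _ = _ := by rw [hfc]; ring
  simpa [B] using image_le_of_deriv_right_lt_deriv_boundary hf hf' hBa hB hfB hx

lemma Real.rpow_le_rpow_sub_one_mul {a M s : ℝ} (ha : 0 ≤ a) (haM : a ≤ M) (hs : 1 ≤ s) :
    a ^ s ≤ M ^ (s - 1) * a := by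
  calc a ^ s = a ^ (s - 1) * a := by
        rw [← Real.rpow_add_one' ha (by linarith), sub_add_cancel]
    _ ≤ M ^ (s - 1) * a :=
        mul_le_mul_of_nonneg_right (Real.rpow_le_rpow ha haM (by linarith)) ha

lemma Ds_le_rpow {s x y : ℝ} (hs : 0 ≤ s) (hxy : x ≤ y) (hy : 0 ≤ y) :
    Ds s x ≤ y ^ s := by
  unfold Ds
  rcases lt_trichotomy x 0 with hx | rfl | hx
  · rw [Real.sign_of_neg hx, mul_neg_one]
    exact (neg_nonpos.2 (Real.rpow_nonneg (abs_nonneg x) s)).trans (Real.rpow_nonneg hy s)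
  · simp [Real.rpow_nonneg hy s]
  · rw [Real.sign_of_pos hx, mul_one, abs_of_pos hx]
    exact Real.rpow_le_rpow hx.le hxy hs

lemma vol_strictMono : StrictMono vol := by
  intro a b hab
  unfold vol
  nlinarith [sub_pos.2 hab, sq_nonneg (a + b), sq_nonneg a, sq_nonneg b]

lemma vol_surjective : Function.Surjective vol := by
  have hc : Continuous vol := by unfold vol; fun_prop
  refine hc.surjective ?_ ?_
  · refine Filter.tendsto_atTop_mono' _ ?_ Filter.tendsto_id
    filter_upwards [Filter.eventually_ge_atTop (1 : ℝ)] with h hh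
    show h ≤ vol h
    unfold vol; nlinarith
  · refine Filter.tendsto_atBot_mono' _ ?_ Filter.tendsto_id
    filter_upwards [Filter.eventually_le_atBot (-1 : ℝ)] with h hh
    show vol h ≤ h
    unfold vol; nlinarith

lemma vol_invFun (V : ℝ) : vol (Function.invFun vol V) = V :=
  Function.invFun_eq (vol_surjective V)

lemma le_invFun_vol_iff {a V : ℝ} : a ≤ Function.invFun vol V ↔ vol a ≤ V := by
  conv_rhs => rw [← vol_invFun V]
  exact vol_strictMono.le_iff_le.symm

lemma pres_le_two (h : ℝ) : pres h ≤ 2 := by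
  unfold pres
  rw [div_le_iff₀ (by positivity)]
  nlinarith [sq_nonneg (h - 1)]

lemma pres_nonneg {h : ℝ} (hh : 0 ≤ h) : 0 ≤ pres h := by
  unfold pres; positivity

lemma two_sub_pres_le_vol_sub_one {h : ℝ} (hh : 1 ≤ h) : 2 - pres h ≤ vol h - 1 := by
  have hpos : (0 : ℝ) < h ^ 2 + 1 := by positivity
  have hgap : 2 - pres h = 2 * (h - 1) ^ 2 / (h ^ 2 + 1) := by
    unfold pres; field_simp; ring
  rw [hgap, div_le_iff₀ hpos]
  unfold vol
  nlinarith [mul_nonneg (mul_nonneg (sub_nonneg.2 hh) (sub_nonneg.2 hh)) (sq_nonneg h),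
    mul_nonneg (sub_nonneg.2 hh) (sq_nonneg (h - 1)), sq_nonneg (h - 1)]

lemma Pfun_le_two (V : ℝ) : Pfun V ≤ 2 := pres_le_two _

lemma Pfun_nonneg {V : ℝ} (hV : 0 ≤ V) : 0 ≤ Pfun V :=
  pres_nonneg (le_invFun_vol_iff.2 (by simpa [vol] using hV))

lemma two_sub_Pfun_le {V : ℝ} (hV : 1 ≤ V) : 2 - Pfun V ≤ V - 1 := by
  have h1 : 1 ≤ Function.invFun vol V := le_invFun_vol_iff.2 (by norm_num [vol]; exact hV)
  have := two_sub_pres_le_vol_sub_one h1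
  rwa [vol_invFun] at this

lemma Ds_Pfun_sub_le {s : ℝ} (hs : 1 ≤ s) (W : ℝ) {V : ℝ} (hV : 1 ≤ V) :
    Ds s (Pfun W - Pfun V) ≤ 2 ^ (s - 1) * (V - 1) := by
  have hgap : 0 ≤ 2 - Pfun V := sub_nonneg.2 (Pfun_le_two V)
  have hgap_le : 2 - Pfun V ≤ 2 := by linarith [Pfun_nonneg (zero_le_one.trans hV)]
  calc Ds s (Pfun W - Pfun V) ≤ (2 - Pfun V) ^ s :=
        Ds_le_rpow (by linarith) (by linarith [Pfun_le_two W]) hgap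
    _ ≤ 2 ^ (s - 1) * (2 - Pfun V) :=
        Real.rpow_le_rpow_sub_one_mul hgap hgap_le hs
    _ ≤ 2 ^ (s - 1) * (V - 1) := mul_le_mul_of_nonneg_left (two_sub_Pfun_le hV) (by positivity)

theorem stmt12_general (N : ℕ) (s : ℝ) (hs : 1 ≤ s)
    (c : Fin N → Fin N → ℝ)
    (hnonneg : ∀ i j, 0 ≤ c i j)
    (k : Fin N)
    (V : ℝ → Fin N → ℝ)
    (hsol : ∀ t ∈ Set.Ici (0 : ℝ), ∀ j, HasDerivWithinAt (fun τ => V τ j)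
      (∑ i, c i j * Ds s (Pfun (V t i) - Pfun (V t j))) (Set.Ici (0 : ℝ)) t)
    (hk : V 0 k ≤ 1) :
    ∀ t ∈ Set.Ici (0 : ℝ), V t k ≤ 1 := by
  intro t ht
  have hcont : ContinuousOn (fun τ => V τ k) (Icc 0 t) := fun x hx =>
    (hsol x hx.1 k).continuousWithinAt.mono Icc_subset_Ici_self
  have hderiv : ∀ x ∈ Ico 0 t, HasDerivWithinAt (fun τ => V τ k)
      (∑ i, c i k * Ds s (Pfun (V x i) - Pfun (V x k))) (Ici x) x := fun x hx =>
    (hsol x hx.1 k).mono (Ici_subset_Ici.2 hx.1)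
  have hdrift : ∀ x ∈ Ico 0 t, 1 ≤ V x k →
      ∑ i, c i k * Ds s (Pfun (V x i) - Pfun (V x k)) ≤
        ((∑ i, c i k) * 2 ^ (s - 1)) * (V x k - 1) := by
    intro x _ hx
    simp only [Finset.sum_mul, mul_assoc]
    exact Finset.sum_le_sum fun i _ =>
      mul_le_mul_of_nonneg_left (Ds_Pfun_sub_le hs _ hx) (hnonneg i k)
  exact le_of_deriv_right_le_mul_sub hcont hderiv hk hdrift t ⟨ht, le_rfl⟩

theorem stmt12 (N : ℕ) (hN : 2 ≤ N) (s : ℝ) (hs : 1 ≤ s)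
    (c : Fin N → Fin N → ℝ)
    (hsymm : ∀ i j, c i j = c j i)
    (hnonneg : ∀ i j, 0 ≤ c i j)
    (hdiag : ∀ i, c i i = 0)
    (hconn : (SimpleGraph.fromRel (fun i j => 0 < c i j)).Connected)
    (k : Fin N)
    (Vbar : ℝ) (hVbar : 0 < Vbar)
    (V : ℝ → Fin N → ℝ)
    (hsol : ∀ t ∈ Set.Ici (0 : ℝ), ∀ j, HasDerivWithinAt (fun τ => V τ j)
      (∑ i, c i j * Ds s (Pfun (V t i) - Pfun (V t j))) (Set.Ici (0 : ℝ)) t)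
    (hinit : ∀ j, 0 ≤ V 0 j)
    (hmean : (1 / (N : ℝ)) * ∑ j, V 0 j = Vbar)
    (hk : V 0 k ≤ 1) :
    ∀ t ∈ Set.Ici (0 : ℝ), V t k ≤ 1 :=
  stmt12_general N s hs c hnonneg k V hsol hk
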